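/- For all integers k ≥ 2 and a ≥ 4, z^k(2^a) = lcm( 3·2^{max(a-2k, 0)}, 4 ). -/

import Mathlib

/-!
The `ℓ` with `n ∣ F_ℓ` are closed under multiples and, as `gcd F_a F_b = F_(gcd a b)`, under
`gcd`; so they are the multiples of `z n`, and `z (lcm m n) = lcm (z m) (z n)`.
Since `F_(2ℓ+2) = F_(ℓ+1) (2 F_ℓ + F_(ℓ+1))` and for `6 ∣ ℓ + 1` the second factor is twice an
odd number, the `2`-adic valuation of `F_(3·2^m)` is exactly `m + 2` for `m ≥ 1`. So, by
induction on `m ≥ 1`, `z (2^(m+3))` is a multiple of `z (2^(m+2)) = 3·2^m` dividing `3·2^(m+1)`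
and different from `3·2^m`, i.e. `z (2^(m+3)) = 3·2^(m+1)`. Together with `z 3 = 4` this gives
`z (lcm (3·2^c) 4) = lcm (3·2^(c-2)) 4`, which iterates.
-/

/-- The order of appearance of `n` in the Fibonacci sequence: the smallest
positive integer `ℓ` such that `n` divides the `ℓ`-th Fibonacci number. -/
noncomputable def z (n : ℕ) : ℕ := sInf {ℓ : ℕ | 0 < ℓ ∧ n ∣ Nat.fib ℓ}

section OrderOfAppearance

variable {n w : ℕ}

theorem z_pos_and_dvd_fib (hw : 0 < w) (hn : n ∣ Nat.fib w) : 0 < z n ∧ n ∣ Nat.fib (z n) :=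
  Nat.sInf_mem (s := {ℓ | 0 < ℓ ∧ n ∣ Nat.fib ℓ}) ⟨w, hw, hn⟩

theorem z_le_of_dvd_fib (hw : 0 < w) (hn : n ∣ Nat.fib w) : z n ≤ w :=
  Nat.sInf_le ⟨hw, hn⟩

theorem dvd_fib_iff_z_dvd (hw : 0 < w) (hn : n ∣ Nat.fib w) (ℓ : ℕ) : n ∣ Nat.fib ℓ ↔ z n ∣ ℓ := by
  obtain ⟨hz, hzn⟩ := z_pos_and_dvd_fib hw hn
  refine ⟨fun h => ?_, fun h => hzn.trans (Nat.fib_dvd _ _ h)⟩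
  rcases ℓ.eq_zero_or_pos with rfl | hℓ
  · exact dvd_zero _
  have hgcd : n ∣ Nat.fib (Nat.gcd (z n) ℓ) := by
    rw [Nat.fib_gcd]
    exact Nat.dvd_gcd hzn h
  have hgcd_eq : Nat.gcd (z n) ℓ = z n :=
    le_antisymm (Nat.gcd_le_left _ hz) (z_le_of_dvd_fib (Nat.gcd_pos_of_pos_right _ hℓ) hgcd)
  exact hgcd_eq ▸ Nat.gcd_dvd_right _ _

theorem z_eq_of_minimal {d : ℕ} (hd : 0 < d) (hn : n ∣ Nat.fib d)
    (hmin : ∀ ℓ < d, 0 < ℓ → ¬ n ∣ Nat.fib ℓ) : z n = d := by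
  obtain ⟨hz, hzn⟩ := z_pos_and_dvd_fib hd hn
  exact le_antisymm (z_le_of_dvd_fib hd hn) (not_lt.1 fun hlt => hmin _ hlt hz hzn)

theorem z_eq_of_dvd_fib_iff {d : ℕ} (hd : 0 < d) (h : ∀ ℓ, n ∣ Nat.fib ℓ ↔ d ∣ ℓ) : z n = d :=
  have hn : n ∣ Nat.fib d := (h d).2 dvd_rfl
  Nat.dvd_antisymm ((dvd_fib_iff_z_dvd hd hn d).1 hn) ((h _).1 (z_pos_and_dvd_fib hd hn).2)

theorem z_lcm {m wm : ℕ} (hwm : 0 < wm) (hm : m ∣ Nat.fib wm) (hw : 0 < w) (hn : n ∣ Nat.fib w) :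
    z (Nat.lcm m n) = Nat.lcm (z m) (z n) := by
  refine z_eq_of_dvd_fib_iff
    (Nat.lcm_pos (z_pos_and_dvd_fib hwm hm).1 (z_pos_and_dvd_fib hw hn).1) fun ℓ => ?_
  rw [Nat.lcm_dvd_iff, Nat.lcm_dvd_iff, dvd_fib_iff_z_dvd hwm hm, dvd_fib_iff_z_dvd hw hn]

end OrderOfAppearance

theorem z_two : z 2 = 3 := z_eq_of_minimal (by norm_num) (by decide) (by decide)

theorem z_three : z 3 = 4 := z_eq_of_minimal (by norm_num) (by decide) (by decide)

theorem z_eight : z 8 = 6 := z_eq_of_minimal (by norm_num) (by decide) (by decide)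

theorem z_twelve : z 12 = 12 := z_eq_of_minimal (by norm_num) (by decide) (by decide)

theorem two_dvd_fib_iff (ℓ : ℕ) : 2 ∣ Nat.fib ℓ ↔ 3 ∣ ℓ :=
  z_two ▸ dvd_fib_iff_z_dvd (w := 3) (by norm_num) (by decide) ℓ

theorem padicValNat_two_fib_two_mul {n : ℕ} (hn : 6 ∣ n) (hn0 : n ≠ 0) :
    padicValNat 2 (Nat.fib (2 * n)) = padicValNat 2 (Nat.fib n) + 1 := by
  obtain ⟨m, rfl⟩ : ∃ m, n = m + 1 := ⟨n - 1, by omega⟩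
  have hodd : ¬ 2 ∣ Nat.fib m := by
    rw [two_dvd_fib_iff]
    omega
  obtain ⟨c, hc⟩ : 4 ∣ Nat.fib (m + 1) := (by decide : 4 ∣ Nat.fib 6).trans (Nat.fib_dvd _ _ hn)
  have hfactor : 2 * Nat.fib m + Nat.fib (m + 1) = 2 * (Nat.fib m + 2 * c) := by omega
  have hm0 : Nat.fib (m + 1) ≠ 0 := (Nat.fib_pos.2 m.succ_pos).ne'
  rw [show 2 * (m + 1) = 2 * m + 2 by ring, Nat.fib_two_mul_add_two, hfactor,
    padicValNat.mul hm0 (by omega), padicValNat.mul two_ne_zero (by omega),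
    padicValNat.self one_lt_two,
    padicValNat.eq_zero_of_not_dvd (n := Nat.fib m + 2 * c) (by omega)]

theorem padicValNat_two_fib_three_mul_two_pow {m : ℕ} (hm : 1 ≤ m) :
    padicValNat 2 (Nat.fib (3 * 2 ^ m)) = m + 2 := by
  induction m, hm using Nat.le_induction with
  | base => rw [show Nat.fib (3 * 2 ^ 1) = 2 ^ 3 by decide, padicValNat.prime_pow]
  | succ m hm ih =>
    have h6 : 6 ∣ 3 * 2 ^ m := mul_dvd_mul_left 3 (dvd_pow_self 2 (by omega))
    rw [pow_succ, ← mul_assoc, mul_comm _ 2, padicValNat_two_fib_two_mul h6 (by positivity), ih]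

theorem two_pow_dvd_fib_three_mul_two_pow_iff {m : ℕ} (hm : 1 ≤ m) (j : ℕ) :
    2 ^ j ∣ Nat.fib (3 * 2 ^ m) ↔ j ≤ m + 2 := by
  rw [padicValNat_dvd_iff_le (Nat.fib_pos.2 (by positivity)).ne',
    padicValNat_two_fib_three_mul_two_pow hm]

theorem z_two_pow {m : ℕ} (hm : 1 ≤ m) : z (2 ^ (m + 2)) = 3 * 2 ^ m := by
  induction m, hm using Nat.le_induction with
  | base => exact z_eight
  | succ m hm ih =>
    have hw := (two_pow_dvd_fib_three_mul_two_pow_iff (m := m + 1) (by omega) (m + 1 + 2)).2 le_rfl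
    obtain ⟨hz, hzdvd⟩ := z_pos_and_dvd_fib (by positivity) hw
    have hdvd : z (2 ^ (m + 1 + 2)) ∣ 3 * 2 ^ m * 2 := by
      rw [mul_assoc, ← pow_succ]
      exact (dvd_fib_iff_z_dvd (by positivity) hw _).1 hw
    have hw' := (two_pow_dvd_fib_three_mul_two_pow_iff hm (m + 2)).2 le_rfl
    obtain ⟨c, hc⟩ : 3 * 2 ^ m ∣ z (2 ^ (m + 1 + 2)) :=
      ih ▸ (dvd_fib_iff_z_dvd (by positivity) hw' _).1 ((pow_dvd_pow 2 (by omega)).trans hzdvd)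
    have hc2 : c ∣ 2 := by
      rw [hc] at hdvd
      exact Nat.dvd_of_mul_dvd_mul_left (by positivity) hdvd
    have hc1 : c ≠ 1 := by
      rintro rfl
      rw [hc, mul_one, two_pow_dvd_fib_three_mul_two_pow_iff hm] at hzdvd
      omega
    have hc0 : c ≠ 0 := by
      rintro rfl
      omega
    obtain rfl : c = 2 := by
      have := Nat.le_of_dvd two_pos hc2
      omega
    rw [hc, pow_succ, mul_assoc]

/-- The `lcm` with `4` makes the formula uniform in `c`: for `c ≤ 2` both sides are `12 = z 12`. -/
theorem z_lcm_three_mul_two_pow_four (c : ℕ) :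
    z (Nat.lcm (3 * 2 ^ c) 4) = Nat.lcm (3 * 2 ^ (c - 2)) 4 := by
  rcases lt_or_ge c 3 with hc | hc
  · interval_cases c <;> norm_num [z_twelve]
  obtain ⟨m, rfl⟩ : ∃ m, c = m + 1 + 2 := ⟨c - 3, by omega⟩
  have h4 : 4 ∣ 3 * 2 ^ (m + 1 + 2) :=
    (pow_dvd_pow 2 (by omega : 2 ≤ m + 1 + 2)).trans (dvd_mul_left _ _)
  have hw := (two_pow_dvd_fib_three_mul_two_pow_iff (m := m + 1) (by omega) (m + 1 + 2)).2 le_rfl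
  rw [Nat.lcm_eq_left h4, ← (Nat.Coprime.pow_right _ (by norm_num : Nat.Coprime 3 2)).lcm_eq_mul,
    z_lcm (wm := 4) (by norm_num) (by decide) (by positivity) hw, z_three, z_two_pow (by omega),
    Nat.lcm_comm, show m + 1 + 2 - 2 = m + 1 by omega]

theorem z_iterate_lcm_three_mul_two_pow_four (k c : ℕ) :
    z^[k] (Nat.lcm (3 * 2 ^ c) 4) = Nat.lcm (3 * 2 ^ (c - 2 * k)) 4 := by
  induction k generalizing c with
  | zero => rfl
  | succ k ih =>
    rw [Function.iterate_succ_apply, z_lcm_three_mul_two_pow_four, ih,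
      show c - 2 - 2 * k = c - 2 * (k + 1) by omega]

theorem z_iter_two_pow (k a : ℕ) (hk : 2 ≤ k) (ha : 4 ≤ a) :
    z^[k] (2 ^ a) = Nat.lcm (3 * 2 ^ (max (a - 2 * k) 0)) 4 := by
  obtain ⟨j, rfl⟩ : ∃ j, k = j + 1 := ⟨k - 1, by omega⟩
  obtain ⟨m, rfl⟩ : ∃ m, a = m + 2 := ⟨a - 2, by omega⟩
  have hfirst : z (2 ^ (m + 2)) = Nat.lcm (3 * 2 ^ m) 4 :=
    (z_two_pow (by omega)).trans
      (Nat.lcm_eq_left ((pow_dvd_pow 2 (by omega : 2 ≤ m)).trans (dvd_mul_left _ _))).symm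
  rw [Function.iterate_succ_apply, hfirst, z_iterate_lcm_three_mul_two_pow_four,
    max_eq_left (Nat.zero_le _), show m - 2 * j = m + 2 - 2 * (j + 1) by omega]
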